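/- arXiv:2304.08184 — 3 statements merged into one kernel-verified Lean document; each statement's English description precedes it below -/
import Mathlib

section
/- Let Σ be a 2×2 real symmetric positive definite matrix with entries Σ₁₁, Σ₁₂ = Σ₂₁, Σ₂₂ such that D := Σ₁₁ − 2Σ₁₂ + Σ₂₂ > 0. Set η = √(det Σ), t = √(Σ₁₁ + Σ₂₂ + 2η), S = (1/t)(Σ + η·I₂), T = (t/((Σ₁₁+η)(Σ₂₂+η) − Σ₁₂²))·[[Σ₂₂+η, −Σ₁₂], [−Σ₁₂, Σ₁₁+η]], and w* = (Σ₂₂ − Σ₁₂)/D. Then the row vector (w*, 1−w*)·S equals (det Σ / D) times the row vector (1, 1)·T. -/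
/-!
By the 2×2 Cayley–Hamilton theorem, `(Σ + ηI)² = (tr Σ + 2η) Σ` when `η² = det Σ`, so `S` is a
square root of `Σ`, and `T` is `S⁻¹` written through the adjugate. The weight vector `(w*, 1 − w*)`
is `(1, 1) adj Σ / D`, and `adj Σ · S = adj Σ · Σ · S⁻¹ = det Σ · S⁻¹ = det Σ · T`.
-/

open Matrix

namespace Matrix

variable {n R K : Type*} [Fintype n] [DecidableEq n] [CommRing R] [Field K]

theorem add_smul_one_mul_self_of_sq_eq_det (A : Matrix (Fin 2) (Fin 2) R) {η : R}
    (hη : η ^ 2 = A.det) :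
    (A + η • 1) * (A + η • 1) = (A.trace + 2 * η) • A := by
  rw [det_fin_two] at hη
  ext i j
  fin_cases i <;> fin_cases j <;> simp [mul_apply, Fin.sum_univ_two, trace_fin_two, one_apply] <;>
    [linear_combination hη; ring; ring; linear_combination hη]

theorem inv_smul_add_smul_one_mul_self (A : Matrix (Fin 2) (Fin 2) K) {η t : K}
    (hη : η ^ 2 = A.det) (ht : t ^ 2 = A.trace + 2 * η) (ht0 : t ≠ 0) :
    (t⁻¹ • (A + η • 1)) * (t⁻¹ • (A + η • 1)) = A := by
  rw [smul_mul_smul, add_smul_one_mul_self_of_sq_eq_det A hη, ← ht, smul_smul]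
  field_simp
  exact one_smul K A

theorem isUnit_det_of_mul_self_eq {A S : Matrix n n R} (hS : S * S = A) (hA : IsUnit A.det) :
    IsUnit S.det := by
  rw [← hS, det_mul] at hA
  exact isUnit_of_mul_isUnit_left hA

theorem adjugate_mul_of_mul_self_eq {A S : Matrix n n R} (hS : S * S = A)
    (hdet : IsUnit S.det) : adjugate A * S = A.det • S⁻¹ :=
  calc adjugate A * S = adjugate A * A * S⁻¹ := by
        rw [← hS, ← mul_assoc, mul_nonsing_inv_cancel_right _ _ hdet]
    _ = A.det • S⁻¹ := by rw [adjugate_mul, smul_mul_assoc, one_mul]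

theorem inv_smul_fin_two_of_symm (B : Matrix (Fin 2) (Fin 2) K) (hB : B 1 0 = B 0 1) (t : K) :
    (t⁻¹ • B)⁻¹ = (t / (B 0 0 * B 1 1 - B 0 1 ^ 2)) • !![B 1 1, -B 0 1; -B 0 1, B 0 0] := by
  rw [inv_def, adjugate_smul, det_smul, adjugate_fin_two, det_fin_two, hB, Ring.inverse_eq_inv',
    smul_smul]
  congr 1
  rcases eq_or_ne t 0 with rfl | ht
  · simp
  · simp [field]

theorem weight_eq_inv_smul_vecMul_adjugate (A : Matrix (Fin 2) (Fin 2) K) (hA : A 1 0 = A 0 1)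
    (hD : A 0 0 - 2 * A 0 1 + A 1 1 ≠ 0) :
    let w := (A 1 1 - A 0 1) / (A 0 0 - 2 * A 0 1 + A 1 1)
    ![w, 1 - w] = (A 0 0 - 2 * A 0 1 + A 1 1)⁻¹ • vecMul ![1, 1] (adjugate A) := by
  intro w
  rw [eq_inv_smul_iff₀ hD]
  ext i
  fin_cases i <;> simp [w, adjugate_fin_two, hA] <;> field_simp <;> ring

theorem PosDef.trace_add_two_mul_sqrt_det_pos [Nonempty n] {A : Matrix n n ℝ} (hA : A.PosDef) :
    0 < A.trace + 2 * √A.det := by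
  have := Real.sqrt_nonneg A.det
  linarith [hA.trace_pos]

end Matrix

/-- Key algebraic identity in the proof of Corollary 4.1: with `S = Σ^{1/2}`
and `T = Σ^{-1/2}` given explicitly, and `w* = (Σ₂₂ − Σ₁₂)/D` the optimal
weight, the row vector `(w*, 1−w*)·S` equals `(det Σ / D)` times `(1,1)·T`. -/
theorem stmt4 (Sg : Matrix (Fin 2) (Fin 2) ℝ) (hSg : Sg.PosDef)
    (hD : 0 < Sg 0 0 - 2 * Sg 0 1 + Sg 1 1) :
    let D : ℝ := Sg 0 0 - 2 * Sg 0 1 + Sg 1 1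
    let η : ℝ := Real.sqrt Sg.det
    let t : ℝ := Real.sqrt (Sg 0 0 + Sg 1 1 + 2 * η)
    let S : Matrix (Fin 2) (Fin 2) ℝ := t⁻¹ • (Sg + η • (1 : Matrix (Fin 2) (Fin 2) ℝ))
    let T : Matrix (Fin 2) (Fin 2) ℝ :=
      (t / ((Sg 0 0 + η) * (Sg 1 1 + η) - (Sg 0 1) ^ 2)) •
        !![Sg 1 1 + η, -(Sg 0 1); -(Sg 0 1), Sg 0 0 + η]
    let wstar : ℝ := (Sg 1 1 - Sg 0 1) / D
    Matrix.vecMul ![wstar, 1 - wstar] S = (Sg.det / D) • Matrix.vecMul ![1, 1] T := by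
  intro D η t S T wstar
  have hsymm : Sg 1 0 = Sg 0 1 := by simpa using hSg.isHermitian.apply 0 1
  have hdet : 0 < Sg.det := hSg.det_pos
  have htr := hSg.trace_add_two_mul_sqrt_det_pos
  rw [trace_fin_two] at htr
  have hS : S * S = Sg := inv_smul_add_smul_one_mul_self Sg (Real.sq_sqrt hdet.le)
    (by rw [trace_fin_two]; exact Real.sq_sqrt htr.le) (Real.sqrt_pos.mpr htr).ne'
  have hSdet : IsUnit S.det := isUnit_det_of_mul_self_eq hS hdet.ne'.isUnit
  have hT : S⁻¹ = T := by
    have h := inv_smul_fin_two_of_symm (Sg + η • 1) (by simp [hsymm]) t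
    simp only [Matrix.add_apply, Matrix.smul_apply, one_apply_eq, one_apply_ne zero_ne_one,
      smul_eq_mul, mul_one, mul_zero, add_zero] at h
    exact h
  calc vecMul ![wstar, 1 - wstar] S = D⁻¹ • vecMul (vecMul ![1, 1] (adjugate Sg)) S := by
        rw [weight_eq_inv_smul_vecMul_adjugate Sg hsymm hD.ne', smul_vecMul]
    _ = D⁻¹ • vecMul ![1, 1] (Sg.det • S⁻¹) := by
        rw [vecMul_vecMul, adjugate_mul_of_mul_self_eq hS hSdet]
    _ = (Sg.det / D) • vecMul ![1, 1] T := by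
        rw [hT, vecMul_smul, smul_smul, div_eq_inv_mul]
end

section
/- Let I be a nonempty finite set of n units, 𝒮 a finite set of strata, S : I → 𝒮, A : I → {0,1}, Y : I → ℝ, and X : I → ℝᵏ. For s ∈ 𝒮 and a ∈ {0,1}, let ℵ_{a,s} = {i ∈ I : A(i) = a, S(i) = s}, n_{a,s} = |ℵ_{a,s}|, n_s = n_{0,s} + n_{1,s}, and assume n_{1,s} > 0 and n_{0,s} > 0 for every s ∈ 𝒮. Let X̄_s = (1/n_s)·Σ_{i : S(i)=s} X(i), X̆(i) = X(i) − X̄_{S(i)}, and π̂_s = n_{1,s}/n_s. Suppose that for each a ∈ {0,1} and s ∈ 𝒮 the real number τ_{a,s} and the vector β_{a,s} ∈ ℝᵏ satisfy the intercept normal equation Σ_{i ∈ ℵ_{a,s}} (Y(i) − τ_{a,s} − X̆(i)ᵀβ_{a,s}) = 0. Then Σ_{s∈𝒮} (n_s/n)(τ_{1,s} − τ_{0,s}) = (1/n)·Σ_{i∈I} A(i)·(Y(i) − X(i)ᵀβ_{1,S(i)})/π̂_{S(i)} − (1/n)·Σ_{i∈I} (1−A(i))·(Y(i) − X(i)ᵀβ_{0,S(i)})/(1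 − π̂_{S(i)}) + (1/n)·Σ_{i∈I} X(i)ᵀ(β_{1,S(i)} − β_{0,S(i)}). -/
open Finset

/-- The stratum-treatment cell `ℵ_{a,s} = {i : A i = a, S i = s}`. -/
def cell {ι 𝓢 : Type*} [Fintype ι] [DecidableEq 𝓢]
    (S : ι → 𝓢) (A : ι → Fin 2) (a : Fin 2) (s : 𝓢) : Finset ι :=
  Finset.univ.filter fun i => A i = a ∧ S i = s

/-- `n_{a,s}`, the size of the cell `ℵ_{a,s}`. -/
def ncell {ι 𝓢 : Type*} [Fintype ι] [DecidableEq 𝓢]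
    (S : ι → 𝓢) (A : ι → Fin 2) (a : Fin 2) (s : 𝓢) : ℕ :=
  (cell S A a s).card

/-- `n_s = n_{0,s} + n_{1,s}`, the size of stratum `s`. -/
def nStratum {ι 𝓢 : Type*} [Fintype ι] [DecidableEq 𝓢]
    (S : ι → 𝓢) (A : ι → Fin 2) (s : 𝓢) : ℕ :=
  ncell S A 0 s + ncell S A 1 s

/-- The stratum-level covariate mean `X̄_s = (1/n_s) Σ_{i : S i = s} X i`. -/
noncomputable def xbar {ι 𝓢 : Type*} [Fintype ι] [DecidableEq 𝓢] {k : ℕ}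
    (S : ι → 𝓢) (A : ι → Fin 2) (X : ι → Fin k → ℝ) (s : 𝓢) : Fin k → ℝ :=
  ((nStratum S A s : ℝ))⁻¹ • ∑ i ∈ Finset.univ.filter (fun i => S i = s), X i

/-- The empirical propensity `π̂_s = n_{1,s}/n_s`. -/
noncomputable def pihat {ι 𝓢 : Type*} [Fintype ι] [DecidableEq 𝓢]
    (S : ι → 𝓢) (A : ι → Fin 2) (s : 𝓢) : ℝ :=
  (ncell S A 1 s : ℝ) / (nStratum S A s : ℝ)

/-- AIPW representation of the fully saturated regression-adjusted ATE
estimator: if for each cell `(a,s)` the intercept `τ_{a,s}` and slope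
`β_{a,s}` satisfy the intercept normal equation with respect to the
stratum-demeaned covariates `X̆ i = X i − X̄_{S i}`, then
`Σ_s (n_s/n)(τ_{1,s} − τ_{0,s})` equals the AIPW form. -/
theorem stmt6 {ι 𝓢 : Type*} [Fintype ι] [Nonempty ι] [Fintype 𝓢] [DecidableEq 𝓢]
    {k : ℕ} (S : ι → 𝓢) (A : ι → Fin 2) (Y : ι → ℝ) (X : ι → Fin k → ℝ)
    (τ : Fin 2 → 𝓢 → ℝ) (β : Fin 2 → 𝓢 → Fin k → ℝ)
    (hpos : ∀ s : 𝓢, 0 < ncell S A 1 s ∧ 0 < ncell S A 0 s)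
    (hnormal : ∀ (a : Fin 2) (s : 𝓢),
      ∑ i ∈ cell S A a s,
        (Y i - τ a s - ∑ j, (X i j - xbar S A X (S i) j) * β a s j) = 0) :
    ∑ s : 𝓢, ((nStratum S A s : ℝ) / (Fintype.card ι : ℝ)) * (τ 1 s - τ 0 s) =
      (1 / (Fintype.card ι : ℝ)) *
          ∑ i : ι, ((A i : ℕ) : ℝ) * (Y i - ∑ j, X i j * β 1 (S i) j) / pihat S A (S i)
      - (1 / (Fintype.card ι : ℝ)) *
          ∑ i : ι, (1 - ((A i : ℕ) : ℝ)) * (Y i - ∑ j, X i j * β 0 (S i) j) /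
            (1 - pihat S A (S i))
      + (1 / (Fintype.card ι : ℝ)) *
          ∑ i : ι, ∑ j, X i j * (β 1 (S i) j - β 0 (S i) j) := by
  classical
  have hN : ((Fintype.card ι : ℝ)) ≠ 0 := by
    exact_mod_cast Fintype.card_ne_zero
  have hn1 : ∀ s, ((ncell S A 1 s : ℝ)) ≠ 0 := fun s =>
    Nat.cast_ne_zero.2 (hpos s).1.ne'
  have hn0 : ∀ s, ((ncell S A 0 s : ℝ)) ≠ 0 := fun s =>
    Nat.cast_ne_zero.2 (hpos s).2.ne'
  have hsum : ∀ s, (nStratum S A s : ℝ) = (ncell S A 0 s : ℝ) + (ncell S A 1 s : ℝ) := by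
    intro s; simp [nStratum]
  have hns : ∀ s, ((nStratum S A s : ℝ)) ≠ 0 := fun s => by
    have : 0 < nStratum S A s := Nat.add_pos_left (hpos s).2 _
    exact Nat.cast_ne_zero.2 this.ne'
  have hSmem : ∀ (a : Fin 2) (s : 𝓢), ∀ i ∈ cell S A a s, A i = a ∧ S i = s := by
    intro a s i hi; simpa [cell] using hi
  -- split a stratum sum into the two cells
  have hsplit : ∀ (s : 𝓢) (f : ι → ℝ),
      ∑ i ∈ Finset.univ.filter (fun i => S i = s), f i
        = ∑ i ∈ cell S A 0 s, f i + ∑ i ∈ cell S A 1 s, f i := by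
    intro s f
    have h2 : ∀ x : Fin 2, (¬ x = 0) ↔ x = 1 := by decide
    rw [← Finset.sum_filter_add_sum_filter_not
      (Finset.univ.filter (fun i => S i = s)) (fun i => A i = 0)]
    congr 1
    · apply Finset.sum_congr _ (fun _ _ => rfl)
      ext i; simp [cell, and_comm]
    · apply Finset.sum_congr _ (fun _ _ => rfl)
      ext i; simp [cell, and_comm, h2]
  -- xbar fact
  have hxbar : ∀ s j, (nStratum S A s : ℝ) * xbar S A X s j
      = ∑ i ∈ Finset.univ.filter (fun i => S i = s), X i j := by
    intro s j
    simp only [xbar, Pi.smul_apply, smul_eq_mul, Finset.sum_apply]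
    exact mul_inv_cancel_left₀ (hns s) _
  -- intercept normal equation rearranged
  have htau : ∀ (a : Fin 2) (s : 𝓢),
      (ncell S A a s : ℝ) * τ a s
        = (∑ i ∈ cell S A a s, (Y i - ∑ j, X i j * β a s j))
          + (ncell S A a s : ℝ) * ∑ j, xbar S A X s j * β a s j := by
    intro a s
    have h := hnormal a s
    have h2 : ∑ i ∈ cell S A a s,
        ((Y i - ∑ j, X i j * β a s j) - τ a s + ∑ j, xbar S A X s j * β a s j) = 0 := by
      rw [← h]
      refine Finset.sum_congr rfl fun i hi => ?_
      rw [(hSmem a s i hi).2]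
      simp only [sub_mul, Finset.sum_sub_distrib]
      ring
    rw [Finset.sum_add_distrib, Finset.sum_sub_distrib, Finset.sum_const, Finset.sum_const,
      nsmul_eq_mul, nsmul_eq_mul] at h2
    have : (cell S A a s).card = ncell S A a s := rfl
    rw [this] at h2
    linarith
  -- fiberwise decomposition of the three global sums
  rw [← Finset.sum_fiberwise Finset.univ S
      (fun i => ((A i : ℕ) : ℝ) * (Y i - ∑ j, X i j * β 1 (S i) j) / pihat S A (S i)),
    ← Finset.sum_fiberwise Finset.univ S
      (fun i => (1 - ((A i : ℕ) : ℝ)) * (Y i - ∑ j, X i j * β 0 (S i) j) /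
        (1 - pihat S A (S i))),
    ← Finset.sum_fiberwise Finset.univ S
      (fun i => ∑ j, X i j * (β 1 (S i) j - β 0 (S i) j)),
    Finset.mul_sum, Finset.mul_sum, Finset.mul_sum,
    ← Finset.sum_sub_distrib, ← Finset.sum_add_distrib]
  refine Finset.sum_congr rfl fun s _ => ?_
  -- replace S i by s inside fiber sums
  have hrw : ∀ (f : ι → 𝓢 → ℝ),
      ∑ i ∈ Finset.univ.filter (fun i => S i = s), f i (S i)
        = ∑ i ∈ Finset.univ.filter (fun i => S i = s), f i s := by
    intro f
    refine Finset.sum_congr rfl fun i hi => ?_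
    have : S i = s := by simpa using hi
    rw [this]
  rw [hrw (fun i t => ((A i : ℕ) : ℝ) * (Y i - ∑ j, X i j * β 1 t j) / pihat S A t),
    hrw (fun i t => (1 - ((A i : ℕ) : ℝ)) * (Y i - ∑ j, X i j * β 0 t j) / (1 - pihat S A t)),
    hrw (fun i t => ∑ j, X i j * (β 1 t j - β 0 t j))]
  rw [hsplit s, hsplit s, hsplit s]
  -- evaluate the indicator sums
  have e1 : ∑ i ∈ cell S A 0 s,
      ((A i : ℕ) : ℝ) * (Y i - ∑ j, X i j * β 1 s j) / pihat S A s = 0 := by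
    refine Finset.sum_eq_zero fun i hi => ?_
    rw [(hSmem 0 s i hi).1]; simp
  have e2 : ∑ i ∈ cell S A 1 s,
      ((A i : ℕ) : ℝ) * (Y i - ∑ j, X i j * β 1 s j) / pihat S A s
      = (∑ i ∈ cell S A 1 s, (Y i - ∑ j, X i j * β 1 s j)) / pihat S A s := by
    rw [Finset.sum_div]
    refine Finset.sum_congr rfl fun i hi => ?_
    rw [(hSmem 1 s i hi).1]; norm_num
  have e3 : ∑ i ∈ cell S A 1 s,
      (1 - ((A i : ℕ) : ℝ)) * (Y i - ∑ j, X i j * β 0 s j) / (1 - pihat S A s) = 0 := by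
    refine Finset.sum_eq_zero fun i hi => ?_
    rw [(hSmem 1 s i hi).1]; norm_num
  have e4 : ∑ i ∈ cell S A 0 s,
      (1 - ((A i : ℕ) : ℝ)) * (Y i - ∑ j, X i j * β 0 s j) / (1 - pihat S A s)
      = (∑ i ∈ cell S A 0 s, (Y i - ∑ j, X i j * β 0 s j)) / (1 - pihat S A s) := by
    rw [Finset.sum_div]
    refine Finset.sum_congr rfl fun i hi => ?_
    rw [(hSmem 0 s i hi).1]; norm_num
  rw [e1, e2, e3, e4, zero_add, add_zero]
  -- the covariate term
  have hM : (∑ i ∈ cell S A 0 s, ∑ j, X i j * (β 1 s j - β 0 s j))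
      + (∑ i ∈ cell S A 1 s, ∑ j, X i j * (β 1 s j - β 0 s j))
      = (nStratum S A s : ℝ) *
        ∑ j, xbar S A X s j * (β 1 s j - β 0 s j) := by
    rw [← hsplit s, Finset.sum_comm, Finset.mul_sum]
    refine Finset.sum_congr rfl fun j _ => ?_
    rw [← Finset.sum_mul, ← hxbar s j]
    ring
  rw [hM]
  -- 1 - pihat
  have hpi1 : 1 - pihat S A s = (ncell S A 0 s : ℝ) / (nStratum S A s : ℝ) := by
    rw [pihat, eq_div_iff (hns s), sub_mul, div_mul_cancel₀ _ (hns s), hsum s]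
    ring
  rw [hpi1, pihat]
  -- final algebra
  have h1 := htau 1 s
  have h0 := htau 0 s
  set T1 := ∑ i ∈ cell S A 1 s, (Y i - ∑ j, X i j * β 1 s j) with hT1
  set T0 := ∑ i ∈ cell S A 0 s, (Y i - ∑ j, X i j * β 0 s j) with hT0
  set B1 := ∑ j, xbar S A X s j * β 1 s j with hB1
  set B0 := ∑ j, xbar S A X s j * β 0 s j with hB0
  have hBd : ∑ j, xbar S A X s j * (β 1 s j - β 0 s j) = B1 - B0 := by
    rw [hB1, hB0, ← Finset.sum_sub_distrib]
    refine Finset.sum_congr rfl fun j _ => by ring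
  rw [hBd]
  have ht1 : τ 1 s = T1 / (ncell S A 1 s : ℝ) + B1 := by
    rw [div_add' _ _ _ (hn1 s), eq_div_iff (hn1 s)]
    linear_combination h1
  have ht0 : τ 0 s = T0 / (ncell S A 0 s : ℝ) + B0 := by
    rw [div_add' _ _ _ (hn0 s), eq_div_iff (hn0 s)]
    linear_combination h0
  have h0' : (0:ℝ) < (ncell S A 0 s : ℝ) := by exact_mod_cast (hpos s).2
  have h1' : (0:ℝ) < (ncell S A 1 s : ℝ) := by exact_mod_cast (hpos s).1
  have h01 : (ncell S A 0 s : ℝ) + (ncell S A 1 s : ℝ) ≠ 0 := by positivity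
  rw [ht1, ht0, hsum s]
  field_simp
  ring
end

section
/- Let X₁ be a real n₁×k matrix and X₀ a real n₀×k matrix such that Γ₁ := X₁ᵀX₁ and Γ₀ := X₀ᵀX₀ are positive definite; set Γ = Γ₀ + Γ₁ and let R be the positive semidefinite square root of Γ. Then, with ‖·‖ the ℓ²→ℓ² operator norm on matrices, ‖X₁·Γ₁⁻¹·Γ·Γ₀⁻¹·X₀ᵀ‖ ≤ √( ‖R·Γ₀⁻¹·R‖ · ‖R·Γ₁⁻¹·R‖ ). -/
/-!
Write `Γᵢ = XᵢᵀXᵢ`, `Γ = R²` and `Aᵢ = Xᵢ Γᵢ⁻¹ R`. Because `R` and `Γ₀⁻¹` are symmetric, the matrix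
`X₁ Γ₁⁻¹ Γ Γ₀⁻¹ X₀ᵀ` factors as `A₁ A₀ᵀ`, while `AᵢᵀAᵢ = R Γᵢ⁻¹ Γᵢ Γᵢ⁻¹ R = R Γᵢ⁻¹ R`. The C⋆-identity
`‖AᵀA‖ = ‖A‖²` and submultiplicativity then give `‖A₁ A₀ᵀ‖ ≤ ‖A₁‖ ‖A₀‖ = √(‖R Γ₀⁻¹ R‖ ‖R Γ₁⁻¹ R‖)`.
-/

open Matrix

/-- The `ℓ² → ℓ²` operator norm of a real rectangular matrix. -/
noncomputable def l2OpNorm {m n : ℕ} (A : Matrix (Fin m) (Fin n) ℝ) : ℝ :=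
  ‖LinearMap.toContinuousLinearMap (Matrix.toEuclideanLin A)‖

open scoped Matrix.Norms.L2Operator

namespace Matrix

variable {𝕜 : Type*} [RCLike 𝕜] {l m n : Type*} [Fintype m] [Fintype n]

lemma l2_opNorm_mul_conjTranspose_le_sqrt [Fintype l] [DecidableEq l] [DecidableEq n]
    (A : Matrix m n 𝕜) (B : Matrix l n 𝕜) : ‖A * Bᴴ‖ ≤ √(‖Aᴴ * A‖ * ‖Bᴴ * B‖) := by
  rw [l2_opNorm_conjTranspose_mul_self, l2_opNorm_conjTranspose_mul_self,
    mul_mul_mul_comm, Real.sqrt_mul_self (by positivity), ← l2_opNorm_conjTranspose B]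
  exact l2_opNorm_mul A Bᴴ

variable [DecidableEq n]

lemma conjTranspose_mul_self_mul_gram_inv_mul {X : Matrix m n 𝕜} (hX : IsUnit (Xᴴ * X).det)
    {R : Matrix n l 𝕜} :
    (X * (Xᴴ * X)⁻¹ * R)ᴴ * (X * (Xᴴ * X)⁻¹ * R) = Rᴴ * (Xᴴ * X)⁻¹ * R := by
  have hinv : ((Xᴴ * X)⁻¹)ᴴ = (Xᴴ * X)⁻¹ := (isHermitian_conjTranspose_mul_self X).inv
  simp only [conjTranspose_mul, hinv, Matrix.mul_assoc]
  rw [← Matrix.mul_assoc Xᴴ, mul_nonsing_inv_cancel_left (Xᴴ * X) R hX]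

end Matrix

lemma l2OpNorm_eq_norm {m n : ℕ} (A : Matrix (Fin m) (Fin n) ℝ) : l2OpNorm A = ‖A‖ := rfl

/-- Operator-norm inequality used to bound the remainder term `I₉` in the
proof of Theorem 4.2: with `Γ₁ = X₁ᵀX₁`, `Γ₀ = X₀ᵀX₀` positive definite,
`Γ = Γ₀ + Γ₁`, and `R` the PSD square root of `Γ`,
`‖X₁ Γ₁⁻¹ Γ Γ₀⁻¹ X₀ᵀ‖ ≤ √(‖R Γ₀⁻¹ R‖ · ‖R Γ₁⁻¹ R‖)`. -/
theorem stmt13 {n₀ n₁ k : ℕ} (X₁ : Matrix (Fin n₁) (Fin k) ℝ) (X₀ : Matrix (Fin n₀) (Fin k) ℝ)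
    (h1 : (X₁ᵀ * X₁).PosDef) (h0 : (X₀ᵀ * X₀).PosDef)
    (R : Matrix (Fin k) (Fin k) ℝ) (hR : R.PosSemidef)
    (hRR : R * R = X₀ᵀ * X₀ + X₁ᵀ * X₁) :
    l2OpNorm (X₁ * (X₁ᵀ * X₁)⁻¹ * (X₀ᵀ * X₀ + X₁ᵀ * X₁) * (X₀ᵀ * X₀)⁻¹ * X₀ᵀ) ≤
      Real.sqrt (l2OpNorm (R * (X₀ᵀ * X₀)⁻¹ * R) * l2OpNorm (R * (X₁ᵀ * X₁)⁻¹ * R)) := by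
  simp only [← conjTranspose_eq_transpose_of_trivial] at h0 h1 hRR ⊢
  have hR' : Rᴴ = R := hR.isHermitian
  have hdet₀ : IsUnit (X₀ᴴ * X₀).det := h0.det_pos.ne'.isUnit
  have hdet₁ : IsUnit (X₁ᴴ * X₁).det := h1.det_pos.ne'.isUnit
  have factor : X₁ * (X₁ᴴ * X₁)⁻¹ * (R * R) * (X₀ᴴ * X₀)⁻¹ * X₀ᴴ =
      (X₁ * (X₁ᴴ * X₁)⁻¹ * R) * (X₀ * (X₀ᴴ * X₀)⁻¹ * R)ᴴ := by
    simp only [conjTranspose_mul, hR', (isHermitian_conjTranspose_mul_self X₀).inv.eq,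
      Matrix.mul_assoc]
  rw [l2OpNorm_eq_norm, l2OpNorm_eq_norm, l2OpNorm_eq_norm, ← hRR, factor]
  have bound :=
    l2_opNorm_mul_conjTranspose_le_sqrt (X₁ * (X₁ᴴ * X₁)⁻¹ * R) (X₀ * (X₀ᴴ * X₀)⁻¹ * R)
  rwa [conjTranspose_mul_self_mul_gram_inv_mul hdet₀, conjTranspose_mul_self_mul_gram_inv_mul hdet₁,
    hR', mul_comm] at bound
end
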